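/- arXiv:2411.13834 — 2 statements merged into one kernel-verified Lean document; each statement's English description precedes it below -/
import Mathlib

section
/- Suppose γ_L, γ_U : ℝ → ℝ are Lipschitz with constants L_L, L_U, and for each point (t, y) in a set W ⊆ [0, t_c] × ℝ there exists a sample (t_r, y_r) with max(|t - t_r|, |y - y_r|) ≤ ε satisfying min(y_r - γ_L(t_r), γ_U(t_r) - y_r) ≤ η. If η + (max(L_L, L_U) + 1)·ε ≤ 0, then for all (t, y) ∈ W, y ∉ (γ_L(t), γ_U(t)), i.e., the open tube interval at each time avoids the unsafe set W. -/
theorem stmt_4 (γ_L γ_U : ℝ → ℝ) (L_L L_U t_c ε η : ℝ)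
    (hLL : 0 ≤ L_L) (hLU : 0 ≤ L_U)
    (hlipL : ∀ s t : ℝ, |γ_L s - γ_L t| ≤ L_L * |s - t|)
    (hlipU : ∀ s t : ℝ, |γ_U s - γ_U t| ≤ L_U * |s - t|)
    (htc : 0 < t_c) (hε : 0 < ε)
    (W : Set (ℝ × ℝ)) (hW : W ⊆ Set.Icc (0:ℝ) t_c ×ˢ Set.univ)
    (hnet : ∀ p ∈ W, ∃ t_r y_r : ℝ,
      max |p.1 - t_r| |p.2 - y_r| ≤ ε ∧
      min (y_r - γ_L t_r) (γ_U t_r - y_r) ≤ η)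
    (hkey : η + (max L_L L_U + 1) * ε ≤ 0) :
    ∀ p ∈ W, p.2 ∉ Set.Ioo (γ_L p.1) (γ_U p.1) := by
  rintro ⟨t, y⟩ hp ⟨h1, h2⟩
  obtain ⟨t_r, y_r, hnear, hmin⟩ := hnet _ hp
  simp only at hnear h1 h2
  have ht : |t - t_r| ≤ ε := le_trans (le_max_left _ _) hnear
  have hy : |y - y_r| ≤ ε := le_trans (le_max_right _ _) hnear
  have hy1 : y - y_r ≤ ε := (abs_le.mp hy).2
  have hy2 : y_r - y ≤ ε := by have := (abs_le.mp hy).1; linarith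
  have hML : L_L ≤ max L_L L_U := le_max_left _ _
  have hMU : L_U ≤ max L_L L_U := le_max_right _ _
  rcases min_le_iff.mp hmin with hc | hc
  · -- y_r - γ_L t_r ≤ η
    have hL : |γ_L t_r - γ_L t| ≤ L_L * ε :=
      le_trans (hlipL t_r t) (by
        have : |t_r - t| ≤ ε := by rwa [abs_sub_comm]
        nlinarith)
    have hL' : γ_L t_r - γ_L t ≤ L_L * ε := by
      have := (abs_le.mp hL).2; linarith
    have h3 : L_L * ε ≤ max L_L L_U * ε := by nlinarith
    have hkey' : η + max L_L L_U * ε + ε ≤ 0 := by nlinarith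
    linarith
  · -- γ_U t_r - y_r ≤ η
    have hU : |γ_U t_r - γ_U t| ≤ L_U * ε :=
      le_trans (hlipU t_r t) (by
        have : |t_r - t| ≤ ε := by rwa [abs_sub_comm]
        nlinarith)
    have hU' : γ_U t - γ_U t_r ≤ L_U * ε := (abs_le.mp hU).1 |> fun h => by linarith
    have h3 : L_U * ε ≤ max L_L L_U * ε := by nlinarith
    have hkey' : η + max L_L L_U * ε + ε ≤ 0 := by nlinarith
    linarith
end

section
/- Let γ_L, γ_U : ℝ → ℝ be continuous, Y_L, Y_U ∈ ℝ, t_c > 0, ε > 0, η < 0, L = max(L_L, L_U, L_L + L_U, L_L + 1, L_U + 1) where L_L, L_U are Lipschitz constants of γ_L, γ_U. If η + L·ε ≤ 0 and an ε-net of samples in [0, t_c] satisfies Y_L - γ_L(t_r) ≤ η and γ_U(t_r) - Y_U ≤ η and γ_L(t_r) - γ_U(t_r) + γ_d ≤ η for all samples t_r, then for all t ∈ [0, t_c]: Y_L ≤ γ_L(t), γ_U(t) ≤ Y_U, and γ_L(t) + γ_d ≤ γ_U(t). -/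
theorem stmt_5 (γ_L γ_U : ℝ → ℝ) (L_L L_U Y_L Y_U γ_d t_c ε η : ℝ)
    (hLL : 0 ≤ L_L) (hLU : 0 ≤ L_U)
    (hlipL : ∀ s t : ℝ, |γ_L s - γ_L t| ≤ L_L * |s - t|)
    (hlipU : ∀ s t : ℝ, |γ_U s - γ_U t| ≤ L_U * |s - t|)
    (hY : Y_L < Y_U) (hd : 0 < γ_d) (htc : 0 < t_c) (hε : 0 < ε) (hη : η < 0)
    (hkey : η + max (max (max L_L L_U) (L_L + L_U)) (max (L_L + 1) (L_U + 1)) * ε ≤ 0)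
    (hnet : ∀ t ∈ Set.Icc (0:ℝ) t_c,
      ∃ t_r : ℝ, |t - t_r| ≤ ε ∧
        Y_L - γ_L t_r ≤ η ∧ γ_U t_r - Y_U ≤ η ∧ γ_L t_r - γ_U t_r + γ_d ≤ η) :
    ∀ t ∈ Set.Icc (0:ℝ) t_c,
      Y_L ≤ γ_L t ∧ γ_U t ≤ Y_U ∧ γ_L t + γ_d ≤ γ_U t := by
  intro t ht
  obtain ⟨r, hr, h1, h2, h3⟩ := hnet t ht
  set L := max (max (max L_L L_U) (L_L + L_U)) (max (L_L + 1) (L_U + 1)) with hLdef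
  have hLL' : L_L ≤ L := le_trans (le_max_left _ _) (le_trans (le_max_left _ _) (le_max_left _ _))
  have hLU' : L_U ≤ L := le_trans (le_max_right _ _) (le_trans (le_max_left _ _) (le_max_left _ _))
  have hLLU : L_L + L_U ≤ L := le_trans (le_max_right _ _) (le_max_left _ _)
  have hεpos := hε.le
  have hdL : |γ_L t - γ_L r| ≤ L_L * ε := le_trans (hlipL t r)
    (mul_le_mul_of_nonneg_left hr hLL)
  have hdU : |γ_U t - γ_U r| ≤ L_U * ε := le_trans (hlipU t r)
    (mul_le_mul_of_nonneg_left hr hLU)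
  have hdL1 := abs_le.mp hdL
  have hdU1 := abs_le.mp hdU
  have hLLe : L_L * ε ≤ L * ε := mul_le_mul_of_nonneg_right hLL' hεpos
  have hLUe : L_U * ε ≤ L * ε := mul_le_mul_of_nonneg_right hLU' hεpos
  have hLLUe : (L_L + L_U) * ε ≤ L * ε := mul_le_mul_of_nonneg_right hLLU hεpos
  refine ⟨by nlinarith [hdL1.1, hdL1.2], by nlinarith [hdU1.1, hdU1.2], by nlinarith [hdL1.1, hdL1.2, hdU1.1, hdU1.2]⟩
end
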